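/- arXiv:1608.05942 — 8 statements merged into one kernel-verified Lean document; each statement's English description precedes it below -/
import Mathlib

section
/- Let k be a field and let A and B be finite separable field extensions of k whose degrees [A : k] and [B : k] are coprime. Then the tensor product A ⊗[k] B is a field. -/
open TensorProduct

set_option maxHeartbeats 1000000 in
set_option synthInstance.maxHeartbeats 200000 in

theorem tensor_product_of_coprime_separable_is_field
    (k A B : Type*) [Field k] [Field A] [Field B] [Algebra k A] [Algebra k B]
    [FiniteDimensional k A] [FiniteDimensional k B]
    [Algebra.IsSeparable k A] [Algebra.IsSeparable k B]
    (h : Nat.Coprime (Module.finrank k A) (Module.finrank k B)) :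
    IsField (A ⊗[k] B) := by
  by_contra hf
  obtain ⟨m, hm⟩ := Ideal.exists_maximal (A ⊗[k] B)
  have hne : m ≠ ⊥ := Ring.ne_bot_of_isMaximal_of_not_isField hm hf
  set L := (A ⊗[k] B) ⧸ m with hL
  haveI : Nontrivial L := Ideal.Quotient.nontrivial_iff.mpr hm.ne_top
  haveI : FiniteDimensional k (A ⊗[k] B) := Module.Finite.tensorProduct k A B
  haveI : FiniteDimensional k L := Module.Finite.quotient k m
  have hdvdA : Module.finrank k A ∣ Module.finrank k L :=
    ⟨Module.finrank A L, (Module.finrank_mul_finrank k A L).symm⟩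
  have hdvdB : Module.finrank k B ∣ Module.finrank k L := by
    letI : Algebra B (A ⊗[k] B) := Algebra.TensorProduct.rightAlgebra
    haveI : Module.Free B L := Module.Free.of_divisionRing B L
    exact ⟨Module.finrank B L, (Module.finrank_mul_finrank k B L).symm⟩
  have hdvd : Module.finrank k A * Module.finrank k B ∣ Module.finrank k L :=
    h.mul_dvd_of_dvd_of_dvd hdvdA hdvdB
  have hle : Module.finrank k L + Module.finrank k (m.restrictScalars k) =
      Module.finrank k (A ⊗[k] B) := by
    exact (m.restrictScalars k).finrank_quotient_add_finrank
  have htensor : Module.finrank k (A ⊗[k] B) = Module.finrank k A * Module.finrank k B :=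
    Module.finrank_tensorProduct ..
  have hpos : 0 < Module.finrank k L := Module.finrank_pos
  have hLle : Module.finrank k L ≤ Module.finrank k A * Module.finrank k B := by omega
  have hEq : Module.finrank k L = Module.finrank k A * Module.finrank k B :=
    Nat.le_antisymm hLle (Nat.le_of_dvd hpos hdvd)
  have hm0 : Module.finrank k (m.restrictScalars k) = 0 := by omega
  have hbot : m = ⊥ := by
    have := Submodule.finrank_eq_zero.mp hm0
    rwa [Submodule.restrictScalars_eq_bot_iff] at this
  exact hne hbot
end

section
/- Let k be a field and let A and B be finite separable field extensions of k whose degrees [A : k] and [B : k] are coprime. Then A ⊗[k] B is a separable k-algebra, i.e., every element of A ⊗[k] B is separable (has separable minimal polynomial) over k. -/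
open TensorProduct

set_option synthInstance.maxHeartbeats 1000000 in
set_option maxHeartbeats 1600000 in
theorem tensor_product_of_coprime_separable_is_separable
    (k A B : Type*) [Field k] [Field A] [Field B] [Algebra k A] [Algebra k B]
    [FiniteDimensional k A] [FiniteDimensional k B]
    [Algebra.IsSeparable k A] [Algebra.IsSeparable k B]
    (h : Nat.Coprime (Module.finrank k A) (Module.finrank k B)) :
    Algebra.IsSeparable k (A ⊗[k] B) := by
  let E := separableClosure k (AlgebraicClosure k)
  haveI : IsSepClosed ↥E := IsSepClosure.sep_closed k
  let fA : A →ₐ[k] E := IsSepClosed.lift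
  let fB : B →ₐ[k] E := IsSepClosed.lift
  letI : Algebra B E := fB.toRingHom.toAlgebra
  haveI : IsScalarTower k B E := IsScalarTower.of_algebraMap_eq fun x => (fB.commutes x).symm
  let A' : IntermediateField k E := fA.fieldRange
  let eA : A ≃ₐ[k] A'.toSubalgebra :=
    (AlgEquiv.ofInjectiveField fA).trans
      (Subalgebra.equivOfEq _ _ fA.fieldRange_toSubalgebra.symm)
  have H : A'.LinearDisjoint B :=
    IntermediateField.LinearDisjoint.of_finrank_coprime (eA.toLinearEquiv.finrank_eq ▸ h)
  have hinj := H.injective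
  let eB : B ≃ₐ[k] (IsScalarTower.toAlgHom k B E).range :=
    AlgEquiv.ofInjective (IsScalarTower.toAlgHom k B E) fB.injective
  let f : A ⊗[k] B →ₐ[k] E :=
    (Subalgebra.mulMap A'.toSubalgebra (IsScalarTower.toAlgHom k B E).range).comp
      (Algebra.TensorProduct.congr eA eB).toAlgHom
  have finj : Function.Injective f := hinj.comp (Algebra.TensorProduct.congr eA eB).injective
  refine ⟨fun x => ?_⟩
  have hs := Algebra.IsSeparable.isSeparable k (f x)
  rwa [IsSeparable, minpoly.algHom_eq f finj x] at hs
end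

section
/- Let k be a finite field with q elements, and let A and B be finite field extensions of k of coprime degrees a and b. Then A ⊗[k] B is a field with exactly q^(a·b) elements. -/
open TensorProduct

theorem tensor_product_finite_fields_coprime_card
    (k A B : Type*) [Field k] [Fintype k] [Field A] [Field B]
    [Algebra k A] [Algebra k B]
    [FiniteDimensional k A] [FiniteDimensional k B]
    (q a b : ℕ) (hq : Fintype.card k = q)
    (ha : Module.finrank k A = a) (hb : Module.finrank k B = b)
    (hab : Nat.Coprime a b) :
    IsField (A ⊗[k] B) ∧ Nat.card (A ⊗[k] B) = q ^ (a * b) := by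
  classical
  -- embed A and B into an algebraic closure of k
  let E := AlgebraicClosure k
  obtain ⟨φ⟩ : Nonempty (A →ₐ[k] E) := ⟨IsAlgClosed.lift⟩
  obtain ⟨ψ⟩ : Nonempty (B →ₐ[k] E) := ⟨IsAlgClosed.lift⟩
  letI : Algebra B E := ψ.toRingHom.toAlgebra
  haveI : IsScalarTower k B E :=
    IsScalarTower.of_algebraMap_eq fun x => (ψ.commutes x).symm
  let A' : IntermediateField k E := φ.fieldRange
  have hA' : Module.finrank k A' = a := by
    rw [← ha]
    exact ((AlgEquiv.ofInjectiveField φ).toLinearEquiv.finrank_eq).symm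
  have H : A'.LinearDisjoint B := by
    apply IntermediateField.LinearDisjoint.of_finrank_coprime
    rw [hA', hb]; exact hab
  -- H gives injectivity of the multiplication map on the tensor product
  have hinj := H.injective
  -- build an injective algebra hom A ⊗ B → E
  let e1 : A ≃ₐ[k] A'.toSubalgebra := AlgEquiv.ofInjectiveField φ
  let e2 : B ≃ₐ[k] (IsScalarTower.toAlgHom k B E).range :=
    AlgEquiv.ofInjective (IsScalarTower.toAlgHom k B E)
      (IsScalarTower.toAlgHom k B E).toRingHom.injective
  let g : A ⊗[k] B →ₐ[k] E :=
    (Subalgebra.mulMap A'.toSubalgebra (IsScalarTower.toAlgHom k B E).range).comp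
      (Algebra.TensorProduct.congr e1 e2).toAlgHom
  have hg : Function.Injective g := by
    exact hinj.comp (Algebra.TensorProduct.congr e1 e2).injective
  haveI : IsDomain (A ⊗[k] B) := hg.isDomain g.toRingHom
  haveI : Finite (A ⊗[k] B) := Module.finite_of_finite k
  haveI := Fintype.ofFinite (A ⊗[k] B)
  refine ⟨Finite.isField_of_domain _, ?_⟩
  rw [Nat.card_eq_fintype_card, Module.card_eq_pow_finrank (K := k),
    Module.finrank_tensorProduct, ha, hb, hq]
end

section
/- Let k be a field, and let A and B be finite-dimensional commutative k-algebras of dimensions a = dim_k A and b = dim_k B. Let V ⊆ A be a k-subspace of dimension v and U ⊆ B a k-subspace of dimension u, and assume u·a + v·b = a·b + 1. Write V' for the image of V ⊗[k] B in A ⊗[k] B (the subspace spanned by elements x ⊗ β with x ∈ V, β ∈ B) and U' for the image of A ⊗[k] U in A ⊗[k] B. Then for every element t of A ⊗[k] B there exist x ∈ V' and y ∈ U' with (x, y) ≠ (0, 0) and x = y · t. -/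
open TensorProduct

theorem exists_nontrivial_solution
    (k A B : Type*) [Field k] [CommRing A] [CommRing B] [Algebra k A] [Algebra k B]
    [FiniteDimensional k A] [FiniteDimensional k B]
    (a b u v : ℕ) (ha : Module.finrank k A = a) (hb : Module.finrank k B = b)
    (V : Submodule k A) (hV : Module.finrank k V = v)
    (U : Submodule k B) (hU : Module.finrank k U = u)
    (h : u * a + v * b = a * b + 1) (t : A ⊗[k] B) :
    ∃ x ∈ LinearMap.range (TensorProduct.map V.subtype (LinearMap.id : B →ₗ[k] B)),
      ∃ y ∈ LinearMap.range (TensorProduct.map (LinearMap.id : A →ₗ[k] A) U.subtype),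
        (x, y) ≠ (0, 0) ∧ x = y * t := by
  set V' := LinearMap.range (TensorProduct.map V.subtype (LinearMap.id : B →ₗ[k] B)) with hV'
  set U' := LinearMap.range (TensorProduct.map (LinearMap.id : A →ₗ[k] A) U.subtype) with hU'
  have hinjV : Function.Injective (TensorProduct.map V.subtype (LinearMap.id : B →ₗ[k] B)) := by
    have : TensorProduct.map V.subtype (LinearMap.id : B →ₗ[k] B) =
        LinearMap.rTensor B V.subtype := rfl
    rw [this]
    exact Module.Flat.rTensor_preserves_injective_linearMap _ V.injective_subtype
  have hinjU : Function.Injective (TensorProduct.map (LinearMap.id : A →ₗ[k] A) U.subtype) := by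
    have : TensorProduct.map (LinearMap.id : A →ₗ[k] A) U.subtype =
        LinearMap.lTensor A U.subtype := rfl
    rw [this]
    exact Module.Flat.lTensor_preserves_injective_linearMap _ U.injective_subtype
  have hdimV' : Module.finrank k V' = v * b := by
    rw [hV', LinearMap.finrank_range_of_inj hinjV, Module.finrank_tensorProduct, hV, hb]
  have hdimU' : Module.finrank k U' = u * a := by
    rw [hU', LinearMap.finrank_range_of_inj hinjU, Module.finrank_tensorProduct, hU, ha,
      Nat.mul_comm]
  have hdimAB : Module.finrank k (A ⊗[k] B) = a * b := by
    rw [Module.finrank_tensorProduct, ha, hb]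
  -- the map y ↦ y * t from U' to (A⊗B)/V'
  let f : U' →ₗ[k] (A ⊗[k] B) ⧸ V' :=
    V'.mkQ ∘ₗ (LinearMap.mulRight k t).restrictScalars k ∘ₗ U'.subtype
  have hq : Module.finrank k ((A ⊗[k] B) ⧸ V') + v * b = a * b := by
    rw [← hdimV', ← hdimAB]
    exact Submodule.finrank_quotient_add_finrank V'
  have hlt : Module.finrank k ((A ⊗[k] B) ⧸ V') < Module.finrank k U' := by
    rw [hdimU']; omega
  have hker := LinearMap.ker_ne_bot_of_finrank_lt (f := f) hlt
  obtain ⟨y, hy, hyne⟩ := (Submodule.ne_bot_iff _).mp hker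
  refine ⟨(y : A ⊗[k] B) * t, ?_, y, y.2, ?_, rfl⟩
  · have : V'.mkQ ((y : A ⊗[k] B) * t) = 0 := hy
    exact (Submodule.Quotient.mk_eq_zero V').mp this
  · intro hc
    apply hyne
    exact Subtype.ext (by simpa using congrArg Prod.snd hc)
end

section
/- Let k be a field, and let A and B be finite separable field extensions of k of coprime degrees a and b. Let V ⊆ A be a k-subspace of dimension v and U ⊆ B a k-subspace of dimension u with u·a + v·b = a·b + 1. Write V' for the image of V ⊗[k] B in A ⊗[k] B and U' for the image of A ⊗[k] U in A ⊗[k] B. Then for every unit t of A ⊗[k] B there exist x ∈ V' and y ∈ U' such that x and y are both units of A ⊗[k] B and t = x · y⁻¹. -/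
open TensorProduct

set_option maxHeartbeats 2000000
set_option synthInstance.maxHeartbeats 1000000

theorem exists_unit_factorization
    (k A B : Type*) [Field k] [Field A] [Field B] [Algebra k A] [Algebra k B]
    [FiniteDimensional k A] [FiniteDimensional k B]
    [Algebra.IsSeparable k A] [Algebra.IsSeparable k B]
    (a b u v : ℕ) (ha : Module.finrank k A = a) (hb : Module.finrank k B = b)
    (hab : Nat.Coprime a b)
    (V : Submodule k A) (hV : Module.finrank k V = v)
    (U : Submodule k B) (hU : Module.finrank k U = u)
    (h : u * a + v * b = a * b + 1) (t : (A ⊗[k] B)ˣ) :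
    ∃ x y : (A ⊗[k] B)ˣ,
      (x : A ⊗[k] B) ∈ LinearMap.range (TensorProduct.map V.subtype (LinearMap.id : B →ₗ[k] B)) ∧
      (y : A ⊗[k] B) ∈ LinearMap.range (TensorProduct.map (LinearMap.id : A →ₗ[k] A) U.subtype) ∧
      t = x * y⁻¹ := by
  classical
  -- Step 1: `A ⊗[k] B` is a domain (indeed a field) since the degrees are coprime.
  haveI : Algebra.IsAlgebraic k A := Algebra.IsAlgebraic.of_finite k A
  set Ω := AlgebraicClosure B with hΩ
  let f : A →ₐ[k] Ω := IsAlgClosed.lift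
  let g : B →ₐ[k] Ω := IsScalarTower.toAlgHom k B Ω
  have hfinj : Function.Injective f := f.toRingHom.injective
  have hginj : Function.Injective g := g.toRingHom.injective
  have hA' : Module.finrank k f.fieldRange = a := by
    rw [← ha]
    exact ((AlgEquiv.ofInjectiveField f).symm.toLinearEquiv.finrank_eq)
  have hB' : Module.finrank k g.fieldRange = b := by
    rw [← hb]
    exact ((AlgEquiv.ofInjectiveField g).symm.toLinearEquiv.finrank_eq)
  have hd : f.fieldRange.LinearDisjoint g.fieldRange :=
    IntermediateField.LinearDisjoint.of_finrank_coprime (by rw [hA', hB']; exact hab)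
  have hm : f.fieldRange.toSubalgebra.LinearDisjoint g.fieldRange.toSubalgebra :=
    IntermediateField.linearDisjoint_iff'.mp hd
  have hm2 : f.range.LinearDisjoint g.range := by
    rwa [AlgHom.fieldRange_toSubalgebra, AlgHom.fieldRange_toSubalgebra] at hm
  let eA : A ≃ₐ[k] f.range := AlgEquiv.ofInjective f hfinj
  let eB : B ≃ₐ[k] g.range := AlgEquiv.ofInjective g hginj
  let ψ : A ⊗[k] B ≃ₐ[k] (f.range ⊗[k] g.range) := Algebra.TensorProduct.congr eA eB
  let φ : A ⊗[k] B →ₐ[k] Ω := Algebra.TensorProduct.productMap f g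
  have hfact : (Subalgebra.mulMap f.range g.range).comp ψ.toAlgHom = φ := by
    apply Algebra.TensorProduct.ext <;> ext x <;>
      simp [ψ, φ, eA, eB, Subalgebra.mulMap_tmul, AlgEquiv.ofInjective_apply]
  have hφinj : Function.Injective φ := by
    rw [← hfact]
    exact hm2.injective.comp ψ.injective
  haveI : IsDomain (A ⊗[k] B) := hφinj.isDomain φ.toRingHom
  haveI : FiniteDimensional k (A ⊗[k] B) := Module.Finite.tensorProduct k A B
  -- every nonzero element is a unit
  have hunit : ∀ w : A ⊗[k] B, w ≠ 0 → IsUnit w := by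
    intro w hw
    have hinj : Function.Injective (LinearMap.mulLeft k w) := by
      intro x y hxy
      simp only [LinearMap.mulLeft_apply] at hxy
      exact mul_left_cancel₀ hw hxy
    obtain ⟨w', hw'⟩ := (LinearMap.injective_iff_surjective.mp hinj) 1
    simp only [LinearMap.mulLeft_apply] at hw'
    exact IsUnit.of_mul_eq_one (a := w) w' hw'
  -- Step 2: dimension count
  set V' := LinearMap.range (TensorProduct.map V.subtype (LinearMap.id : B →ₗ[k] B)) with hV'
  set U' := LinearMap.range (TensorProduct.map (LinearMap.id : A →ₗ[k] A) U.subtype) with hU'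
  have hVinj : Function.Injective (TensorProduct.map V.subtype (LinearMap.id : B →ₗ[k] B)) :=
    Module.Flat.rTensor_preserves_injective_linearMap V.subtype V.injective_subtype
  have hUinj : Function.Injective (TensorProduct.map (LinearMap.id : A →ₗ[k] A) U.subtype) :=
    Module.Flat.lTensor_preserves_injective_linearMap U.subtype U.injective_subtype
  have hVdim : Module.finrank k V' = v * b := by
    rw [hV', LinearMap.finrank_range_of_inj hVinj, Module.finrank_tensorProduct, hV, hb]
  have hUdim : Module.finrank k U' = u * a := by
    rw [hU', LinearMap.finrank_range_of_inj hUinj, Module.finrank_tensorProduct, hU, ha,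
      Nat.mul_comm]
  -- translate U' by the unit t
  let m : A ⊗[k] B →ₗ[k] A ⊗[k] B := LinearMap.mulLeft k (t : A ⊗[k] B)
  have hminj : Function.Injective m := by
    intro x y hxy
    simp only [m, LinearMap.mulLeft_apply] at hxy
    exact mul_left_cancel₀ (Units.ne_zero t) hxy
  have htUdim : Module.finrank k (U'.map m) = u * a := by
    rw [← hUdim]
    exact (Submodule.equivMapOfInjective m hminj U').symm.finrank_eq
  have htot : Module.finrank k (A ⊗[k] B) = a * b := by
    rw [Module.finrank_tensorProduct, ha, hb]
  have hsum := Submodule.finrank_sup_add_finrank_inf_eq V' (U'.map m)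
  have hsup : Module.finrank k ↥(V' ⊔ U'.map m) ≤ a * b := by
    rw [← htot]; exact Submodule.finrank_le _
  have hinf : 1 ≤ Module.finrank k ↥(V' ⊓ U'.map m) := by
    rw [hVdim, htUdim] at hsum
    omega
  have hne : V' ⊓ U'.map m ≠ ⊥ := by
    intro hbot
    rw [hbot, finrank_bot] at hinf
    omega
  obtain ⟨z, hz, hz0⟩ := Submodule.exists_mem_ne_zero_of_ne_bot hne
  obtain ⟨hzV, hzU⟩ := hz
  obtain ⟨y₀, hy₀U, hy₀⟩ := hzU
  simp only [m, LinearMap.mulLeft_apply] at hy₀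
  have hy₀0 : y₀ ≠ 0 := by
    intro h0
    rw [h0, mul_zero] at hy₀
    exact hz0 hy₀.symm
  obtain ⟨x, hx⟩ := hunit z hz0
  obtain ⟨y, hy⟩ := hunit y₀ hy₀0
  refine ⟨x, y, by rwa [hx], by rwa [hy], ?_⟩
  have : t * y = x := by
    ext
    rw [Units.val_mul, hx, hy, hy₀]
  rw [← this, mul_inv_cancel_right]
end

section
/- Let k be a field and a ≥ 1 an integer. Let K be the field of rational functions in a indeterminates x₀, …, x_{a−1} over k (the fraction field of the multivariate polynomial ring). Then the generic monic polynomial T^a + x_{a−1}·T^{a−1} + … + x₁·T + x₀ in K[T] is irreducible and separable. -/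
open Polynomial

namespace GenericAux

variable (k : Type*) [Field k] (n : ℕ)

noncomputable abbrev R := MvPolynomial (Fin (n+1)) k

/-- the tail: everything except the constant (in x₀) part -/
noncomputable def g : Polynomial (R k n) :=
  X ^ (n+1) + ∑ i ∈ Finset.univ.erase (0 : Fin (n+1)), C (MvPolynomial.X i) * X ^ (i : ℕ)

noncomputable def F : Polynomial (R k n) :=
  X ^ (n+1) + ∑ i : Fin (n+1), C (MvPolynomial.X i) * X ^ (i : ℕ)

theorem F_eq : F k n = C (MvPolynomial.X 0) + g k n := by
  rw [F, g, ← Finset.add_sum_erase _ _ (Finset.mem_univ (0 : Fin (n+1)))]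
  simp only [Fin.val_zero, pow_zero, mul_one]
  ring

/-- ring hom on R[X] fixing X, fixing xⱼ for j ≠ 0, and sending x₀ to t -/
noncomputable def ψ (t : Polynomial (R k n)) : Polynomial (R k n) →+* Polynomial (R k n) :=
  Polynomial.eval₂RingHom
    (MvPolynomial.eval₂Hom ((Polynomial.C (R := R k n)).comp MvPolynomial.C)
      (fun j => if j = 0 then t else C (MvPolynomial.X j)))
    X

@[simp] theorem ψ_X (t) : ψ k n t X = X := eval₂_X _ _

@[simp] theorem ψ_C_X_ne (t) (j : Fin (n+1)) (hj : j ≠ 0) :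
    ψ k n t (C (MvPolynomial.X j)) = C (MvPolynomial.X j) := by
  rw [ψ, coe_eval₂RingHom, eval₂_C, MvPolynomial.eval₂Hom_X']
  simp [hj]

@[simp] theorem ψ_C_X_zero (t) : ψ k n t (C (MvPolynomial.X 0)) = t := by
  rw [ψ, coe_eval₂RingHom, eval₂_C, MvPolynomial.eval₂Hom_X']
  simp

@[simp] theorem ψ_g (t) : ψ k n t (g k n) = g k n := by
  rw [g]
  simp only [map_add, map_pow, map_sum, map_mul, ψ_X]
  refine congrArg (HAdd.hAdd _) ?_
  refine Finset.sum_congr rfl fun j hj => ?_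
  rw [ψ_C_X_ne k n t j (Finset.ne_of_mem_erase hj)]

theorem ψ_comp (t s : Polynomial (R k n))
    (hts : ψ k n t s = C (MvPolynomial.X 0)) :
    (ψ k n t).comp (ψ k n s) = RingHom.id _ := by
  apply Polynomial.ringHom_ext'
  · apply MvPolynomial.ringHom_ext
    · intro c
      simp [ψ, MvPolynomial.eval₂Hom_C]
    · intro j
      by_cases hj : j = 0
      · subst hj
        simp [hts]
      · simp [hj]
  · simp

noncomputable def e : Polynomial (R k n) ≃+* Polynomial (R k n) :=
  RingEquiv.ofRingHom (ψ k n (C (MvPolynomial.X 0) - g k n))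
    (ψ k n (C (MvPolynomial.X 0) + g k n))
    (ψ_comp k n _ _ (by simp)) (ψ_comp k n _ _ (by simp))

theorem e_F : e k n (F k n) = C (MvPolynomial.X 0) := by
  rw [F_eq, e]
  simp [RingEquiv.ofRingHom]

theorem prime_F : Prime (F k n) := by
  have h : Prime (C (MvPolynomial.X 0) : Polynomial (R k n)) := by
    rw [Polynomial.prime_C_iff]
    rw [← MulEquiv.prime_iff (MvPolynomial.finSuccEquiv k n).toMulEquiv]
    have : (MvPolynomial.finSuccEquiv k n).toMulEquiv (MvPolynomial.X 0) = Polynomial.X :=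
      MvPolynomial.finSuccEquiv_X_zero
    rw [this]
    exact Polynomial.prime_X
  rw [← MulEquiv.prime_iff (e k n).toMulEquiv]
  exact (e_F k n) ▸ h

end GenericAux

namespace GenericAux

variable (k : Type*) [Field k] (n : ℕ)

theorem monic_F : (F k n).Monic := by
  rw [F]
  apply Polynomial.monic_X_pow_add
  refine lt_of_le_of_lt (Polynomial.degree_sum_le _ _) ?_
  rw [Finset.sup_lt_iff (by exact_mod_cast WithBot.bot_lt_coe (n+1))]
  intro i _
  calc (C (MvPolynomial.X i) * X ^ (i : ℕ) : Polynomial (R k n)).degree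
      ≤ (C (MvPolynomial.X i) : Polynomial (R k n)).degree
        + (X ^ (i : ℕ) : Polynomial (R k n)).degree := degree_mul_le _ _
    _ ≤ 0 + ((i : ℕ) : WithBot ℕ) := add_le_add degree_C_le (degree_X_pow _).le
    _ = ((i : ℕ) : WithBot ℕ) := zero_add _
    _ < ((n + 1 : ℕ) : WithBot ℕ) := by exact_mod_cast i.isLt

end GenericAux

set_option synthInstance.maxHeartbeats 1000000 in
set_option maxHeartbeats 1000000 in
open GenericAux in
theorem generic_monic_polynomial_irreducible_separable
    (k : Type*) [Field k] (a : ℕ) (ha : 1 ≤ a) :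
    Irreducible (Polynomial.X ^ a +
      ∑ i : Fin a, Polynomial.C
        (algebraMap (MvPolynomial (Fin a) k) (FractionRing (MvPolynomial (Fin a) k))
          (MvPolynomial.X i)) * Polynomial.X ^ (i : ℕ)) ∧
    Polynomial.Separable (Polynomial.X ^ a +
      ∑ i : Fin a, Polynomial.C
        (algebraMap (MvPolynomial (Fin a) k) (FractionRing (MvPolynomial (Fin a) k))
          (MvPolynomial.X i)) * Polynomial.X ^ (i : ℕ)) := by
  obtain ⟨n, rfl⟩ : ∃ n, a = n + 1 := ⟨a - 1, (Nat.succ_pred_eq_of_pos ha).symm⟩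
  set K := FractionRing (MvPolynomial (Fin (n+1)) k) with hK
  have hmap : Polynomial.map (algebraMap (R k n) K) (F k n) =
      Polynomial.X ^ (n+1) + ∑ i : Fin (n+1), Polynomial.C
        (algebraMap (MvPolynomial (Fin (n+1)) k) K (MvPolynomial.X i))
        * Polynomial.X ^ (i : ℕ) := by
    rw [F]
    simp [Polynomial.map_sum]
  have hirr : Irreducible (Polynomial.X ^ (n+1) + ∑ i : Fin (n+1), Polynomial.C
      (algebraMap (MvPolynomial (Fin (n+1)) k) K (MvPolynomial.X i))
      * Polynomial.X ^ (i : ℕ)) := by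
    rw [← hmap]
    exact ((monic_F k n).irreducible_iff_irreducible_map_fraction_map).mp
      (prime_F k n).irreducible
  refine ⟨hirr, (Polynomial.separable_iff_derivative_ne_zero hirr).mpr ?_⟩
  intro h
  have h0 := congrArg (fun p => Polynomial.coeff p 0) h
  simp only [Polynomial.coeff_derivative, Polynomial.coeff_zero, Nat.cast_zero, zero_add,
    mul_one] at h0
  have hc1 : (Polynomial.X ^ (n+1) + ∑ i : Fin (n+1), Polynomial.C
      (algebraMap (MvPolynomial (Fin (n+1)) k) K (MvPolynomial.X i))
      * Polynomial.X ^ (i : ℕ)).coeff 1 ≠ 0 := by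
    rw [Polynomial.coeff_add, Polynomial.finset_sum_coeff]
    simp only [Polynomial.coeff_C_mul, Polynomial.coeff_X_pow]
    rcases n with _ | m
    · simp
    · rw [if_neg (show ¬(1 = m + 1 + 1) by omega)]
      rw [Finset.sum_eq_single (1 : Fin (m+2))]
      · simp only [Fin.val_one, if_pos rfl, mul_one, zero_add]
        simp [IsFractionRing.to_map_eq_zero_iff, MvPolynomial.X_ne_zero]
      · intro b _ hb
        rw [if_neg, mul_zero]
        intro hb1
        exact hb (by apply Fin.ext; rw [Fin.val_one]; omega)
      · intro hmem
        exact absurd (Finset.mem_univ _) hmem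
  exact hc1 h0
end

section
/- Let k be a field, let A be a finite field extension of k, and let K = k(t₁, …, tₙ) be a purely transcendental extension of k (the fraction field of a polynomial ring in n variables over k). Then A ⊗[k] K is a field. -/
open TensorProduct MvPolynomial

section Aux

variable {k A : Type*} [Field k] [Field A] [Algebra k A] {n : ℕ}

lemma aux_key (K : Type*) [Field K] [Algebra (MvPolynomial (Fin n) k) K]
    [Algebra k K] [IsScalarTower k (MvPolynomial (Fin n) k) K]
    (r : MvPolynomial (Fin n) k) :
    aeval (R := A) (fun i => (1:A) ⊗ₜ[k] algebraMap (MvPolynomial (Fin n) k) K (X i))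
        (MvPolynomial.map (algebraMap k A) r)
      = 1 ⊗ₜ[k] algebraMap (MvPolynomial (Fin n) k) K r := by
  induction r using MvPolynomial.induction_on with
  | C c =>
      rw [MvPolynomial.map_C, show (C (algebraMap k A c) : MvPolynomial (Fin n) A)
          = algebraMap A (MvPolynomial (Fin n) A) (algebraMap k A c) from rfl,
        AlgHom.commutes, show algebraMap (MvPolynomial (Fin n) k) K (C c) = algebraMap k K c by
          rw [IsScalarTower.algebraMap_apply k (MvPolynomial (Fin n) k) K]; rfl,
        Algebra.TensorProduct.algebraMap_apply, Algebra.algebraMap_self, RingHom.id_apply,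
        Algebra.algebraMap_eq_smul_one, Algebra.algebraMap_eq_smul_one (R := k) (A := K)]
      exact TensorProduct.smul_tmul c (1:A) (1:K)
  | add p q hp hq => rw [map_add, map_add, hp, hq, map_add, TensorProduct.tmul_add]
  | mul_X p i hp =>
      rw [map_mul, map_mul, hp, MvPolynomial.map_X, aeval_X, map_mul,
        Algebra.TensorProduct.tmul_mul_tmul, one_mul]

lemma aux_isField (K : Type*) [Field K] [Algebra (MvPolynomial (Fin n) k) K]
    [IsFractionRing (MvPolynomial (Fin n) k) K]
    [Algebra k K] [IsScalarTower k (MvPolynomial (Fin n) k) K]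
    (B : Type*) [CommRing B] [Algebra (MvPolynomial (Fin n) A) B] [Algebra k B]
    [IsScalarTower k (MvPolynomial (Fin n) A) B]
    [IsLocalization (Submonoid.map
        (MvPolynomial.map (algebraMap k A) : MvPolynomial (Fin n) k →+* MvPolynomial (Fin n) A)
        (nonZeroDivisors (MvPolynomial (Fin n) k))) B]
    [FiniteDimensional k A] :
    IsField (A ⊗[k] K) := by
  classical
  set f : MvPolynomial (Fin n) k →+* MvPolynomial (Fin n) A :=
    MvPolynomial.map (algebraMap k A) with hf
  set M : Submonoid (MvPolynomial (Fin n) A) :=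
    Submonoid.map f (nonZeroDivisors (MvPolynomial (Fin n) k)) with hMdef
  have hf_inj : Function.Injective f :=
    MvPolynomial.map_injective _ (algebraMap k A).injective
  have hM : M ≤ nonZeroDivisors (MvPolynomial (Fin n) A) :=
    map_le_nonZeroDivisors_of_injective f hf_inj le_rfl
  haveI : IsDomain B :=
    IsLocalization.isDomain_of_le_nonZeroDivisors (S := B) (R := MvPolynomial (Fin n) A) hM
  -- the map P → A ⊗ K
  let w : MvPolynomial (Fin n) A →ₐ[A] A ⊗[k] K :=
    aeval (fun i => (1:A) ⊗ₜ[k] algebraMap (MvPolynomial (Fin n) k) K (X i))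
  have key : ∀ r, w (f r) = 1 ⊗ₜ[k] algebraMap (MvPolynomial (Fin n) k) K r :=
    fun r => aux_key K r
  have hw_units : ∀ m : M, IsUnit (w m) := by
    rintro ⟨m, r, hr, rfl⟩
    rw [key r]
    exact IsUnit.map (Algebra.TensorProduct.includeRight : K →ₐ[k] A ⊗[k] K)
      (IsLocalization.map_units K ⟨r, hr⟩)
  let ψ : B →+* A ⊗[k] K := IsLocalization.lift (S := B) (g := w.toRingHom) hw_units
  -- the maps into B
  let fal : MvPolynomial (Fin n) k →ₐ[k] B :=
    (IsScalarTower.toAlgHom k (MvPolynomial (Fin n) A) B).comp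
      (MvPolynomial.mapAlgHom (Algebra.ofId k A))
  have hfal_eq : ∀ r, fal r = algebraMap (MvPolynomial (Fin n) A) B (f r) := fun r => rfl
  have hfal : ∀ y : nonZeroDivisors (MvPolynomial (Fin n) k), IsUnit (fal y) := by
    intro y
    rw [hfal_eq]
    exact IsLocalization.map_units (M := M) B ⟨f y, ⟨(y : MvPolynomial (Fin n) k), y.2, rfl⟩⟩
  let hK' : K →ₐ[k] B :=
    IsLocalization.liftAlgHom (M := nonZeroDivisors (MvPolynomial (Fin n) k)) hfal
  have hK'_alg : ∀ r, hK' (algebraMap (MvPolynomial (Fin n) k) K r)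
      = algebraMap (MvPolynomial (Fin n) A) B (f r) := by
    intro r
    rw [show hK' (algebraMap (MvPolynomial (Fin n) k) K r) = fal r from
      IsLocalization.lift_eq hfal r]
    exact hfal_eq r
  let hA' : A →ₐ[k] B := (IsScalarTower.toAlgHom k (MvPolynomial (Fin n) A) B).comp
    (IsScalarTower.toAlgHom k A (MvPolynomial (Fin n) A))
  have hA'_eq : ∀ a : A, hA' a = algebraMap (MvPolynomial (Fin n) A) B (C a) := fun a => rfl
  let φ : A ⊗[k] K →ₐ[k] B := Algebra.TensorProduct.productMap hA' hK'
  -- ψ ∘ φ = id, hence φ injective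
  have hψA : ∀ a : A, ψ (hA' a) = a ⊗ₜ[k] 1 := by
    intro a
    rw [hA'_eq, show ψ (algebraMap (MvPolynomial (Fin n) A) B (C a)) = w (C a) from
        IsLocalization.lift_eq hw_units _,
      show (C a : MvPolynomial (Fin n) A) = algebraMap A (MvPolynomial (Fin n) A) a from rfl,
      AlgHom.commutes, Algebra.TensorProduct.algebraMap_apply, Algebra.algebraMap_self,
      RingHom.id_apply]
  have hψK : ∀ s : K, ψ (hK' s) = 1 ⊗ₜ[k] s := by
    have h : ψ.comp hK'.toRingHom
        = (Algebra.TensorProduct.includeRight : K →ₐ[k] A ⊗[k] K).toRingHom := by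
      refine IsLocalization.ringHom_ext (nonZeroDivisors (MvPolynomial (Fin n) k))
        (RingHom.ext fun r => ?_)
      simp only [RingHom.comp_apply, AlgHom.toRingHom_eq_coe, RingHom.coe_coe]
      rw [hK'_alg r, show ψ (algebraMap (MvPolynomial (Fin n) A) B (f r)) = w (f r) from
        IsLocalization.lift_eq hw_units _, key r, Algebra.TensorProduct.includeRight_apply]
    exact fun s => congrArg (fun (g : K →+* A ⊗[k] K) => g s) h
  have hψφ : ∀ x : A ⊗[k] K, ψ (φ x) = x := by
    intro x
    induction x with
    | zero => simp
    | tmul a s =>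
        rw [Algebra.TensorProduct.productMap_apply_tmul, map_mul, hψA, hψK,
          Algebra.TensorProduct.tmul_mul_tmul, mul_one, one_mul]
    | add x y hx hy => rw [map_add, map_add, hx, hy]
  have hφ_inj : Function.Injective φ := Function.LeftInverse.injective hψφ
  haveI : IsDomain (A ⊗[k] K) := hφ_inj.isDomain φ.toRingHom
  -- A ⊗ K is integral over K
  letI : Algebra K (A ⊗[k] K) := Algebra.TensorProduct.rightAlgebra
  haveI : Module.Finite K (A ⊗[k] K) := by
    have hsurj : Function.Surjective (Algebra.TensorProduct.comm k K A) :=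
      (Algebra.TensorProduct.comm k K A).surjective
    refine Module.Finite.of_surjective
      (M := K ⊗[k] A) (σ := RingHom.id K)
      { toFun := (Algebra.TensorProduct.comm k K A)
        map_add' := map_add _
        map_smul' := ?_ } hsurj
    intro c y
    simp only [RingHom.id_apply]
    rw [Algebra.smul_def, Algebra.smul_def, map_mul]
    congr 1
  haveI : Algebra.IsIntegral K (A ⊗[k] K) := Algebra.IsIntegral.of_finite K _
  exact isField_of_isIntegral_of_isField' (R := K) (Field.toIsField K)

end Aux

theorem tensor_with_purely_transcendental_is_field
    (k A : Type*) [Field k] [Field A] [Algebra k A] [FiniteDimensional k A] (n : ℕ) :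
    IsField (A ⊗[k] FractionRing (MvPolynomial (Fin n) k)) :=
  aux_isField (n := n) (FractionRing (MvPolynomial (Fin n) k))
    (Localization (Submonoid.map
      (MvPolynomial.map (algebraMap k A) : MvPolynomial (Fin n) k →+* MvPolynomial (Fin n) A)
      (nonZeroDivisors (MvPolynomial (Fin n) k))))
end

section
/- Let k be an infinite field and let A be a finite étale k-algebra of dimension n over k. Then A is monogenic: there exists a monic separable polynomial f ∈ k[X] of degree n such that A is isomorphic as a k-algebra to k[X]/(f). -/
universe u

open Polynomial

/-- Single-field avoidance lemma: for a finite separable extension `L/k` with `k` infinite,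
there is a monic irreducible separable polynomial of degree `[L:k]` avoiding a given finite
set, whose adjoin-root algebra is isomorphic to `L`. -/
theorem EtaleMonogenic.exists_good_poly (k L : Type u) [Field k] [Infinite k] [Field L]
    [Algebra k L] [FiniteDimensional k L] [Algebra.IsSeparable k L] (B : Finset (Polynomial k)) :
    ∃ f : Polynomial k, f.Monic ∧ Irreducible f ∧ f.Separable ∧
      f.natDegree = Module.finrank k L ∧ f ∉ B ∧
      Nonempty ((Polynomial k ⧸ Ideal.span {f}) ≃ₐ[k] L) := by
  obtain ⟨α, hα⟩ := Field.exists_primitive_element k L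
  set φ := algebraMap k L with hφ
  have hinj : Function.Injective (fun c : k => α + φ c) := fun a b h => by
    simpa using (algebraMap k L).injective (add_left_cancel h)
  have hbad : (⋃ g ∈ B, {c : k | minpoly k (α + φ c) = g}).Finite := by
    classical
    refine Set.Finite.biUnion B.finite_toSet (fun g _ => ?_)
    rcases Set.eq_empty_or_nonempty {c : k | minpoly k (α + φ c) = g} with h | ⟨c₀, hc₀⟩
    · simp [h]
    have hg0 : g ≠ 0 := by
      rw [← hc₀]
      exact minpoly.ne_zero (IsIntegral.of_finite k _)
    have : {c : k | minpoly k (α + φ c) = g} ⊆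
        (fun c : k => α + φ c) ⁻¹' ↑(g.map φ).roots.toFinset := by
      intro c hc
      simp only [Set.mem_preimage, Multiset.mem_toFinset, Finset.mem_coe, mem_roots']
      refine ⟨by simpa [Polynomial.map_ne_zero_iff (algebraMap k L).injective] using hg0, ?_⟩
      have := minpoly.aeval k (α + φ c)
      rw [hc] at this
      rwa [IsRoot.def, eval_map, ← aeval_def]
    exact Set.Finite.subset (((g.map φ).roots.toFinset : Finset L).finite_toSet.preimage
      (hinj.injOn)) this
  obtain ⟨c, hc⟩ := (hbad.infinite_compl).nonempty
  set β := α + φ c with hβ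
  have hβint : IsIntegral k β := IsIntegral.of_finite k β
  have htop : IntermediateField.adjoin k {β} = ⊤ := by
    rw [eq_top_iff, ← hα]
    rw [IntermediateField.adjoin_simple_le_iff]
    have hβmem : β ∈ IntermediateField.adjoin k ({β} : Set L) :=
      IntermediateField.mem_adjoin_simple_self k β
    have : α = β - φ c := by rw [hβ]; ring
    rw [this]
    exact sub_mem hβmem (IntermediateField.algebraMap_mem _ c)
  refine ⟨minpoly k β, minpoly.monic hβint, minpoly.irreducible hβint,
    Algebra.IsSeparable.isSeparable k β, ?_, ?_, ?_⟩
  · rw [← IntermediateField.adjoin.finrank hβint, htop, IntermediateField.finrank_top']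
  · intro hmem
    exact hc (Set.mem_iUnion₂.mpr ⟨minpoly k β, hmem, rfl⟩)
  · refine ⟨?_⟩
    have e1 : AdjoinRoot (minpoly k β) ≃ₐ[k] IntermediateField.adjoin k ({β} : Set L) :=
      IntermediateField.adjoinRootEquivAdjoin k hβint
    exact e1.trans ((IntermediateField.equivOfEq htop).trans IntermediateField.topEquiv)

/-- Choose pairwise distinct polynomials for a finite family of fields. -/
theorem EtaleMonogenic.exists_good_family (k : Type u) [Field k] [Infinite k] {ι : Type u}
    [Fintype ι] (L : ι → Type u) [∀ i, Field (L i)] [∀ i, Algebra k (L i)]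
    [∀ i, FiniteDimensional k (L i)] [∀ i, Algebra.IsSeparable k (L i)] :
    ∃ f : ι → Polynomial k, Function.Injective f ∧ ∀ i, (f i).Monic ∧ Irreducible (f i) ∧
      (f i).Separable ∧ (f i).natDegree = Module.finrank k (L i) ∧
      Nonempty ((Polynomial k ⧸ Ideal.span {f i}) ≃ₐ[k] L i) := by
  classical
  have key : ∀ s : Finset ι, ∃ f : ι → Polynomial k, Set.InjOn f ↑s ∧
      ∀ i ∈ s, (f i).Monic ∧ Irreducible (f i) ∧ (f i).Separable ∧
      (f i).natDegree = Module.finrank k (L i) ∧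
      Nonempty ((Polynomial k ⧸ Ideal.span {f i}) ≃ₐ[k] L i) := by
    intro s
    induction s using Finset.induction with
    | empty => exact ⟨fun _ => 0, by simp, by simp⟩
    | @insert a s ha ih =>
      obtain ⟨f, hinj, hf⟩ := ih
      obtain ⟨g, hg1, hg2, hg3, hg4, hg5, hg6⟩ :=
        EtaleMonogenic.exists_good_poly k (L a) (s.image f)
      have hne : ∀ i ∈ s, i ≠ a := fun i hi h => ha (h ▸ hi)
      refine ⟨Function.update f a g, ?_, ?_⟩
      · intro i hi j hj hij
        simp only [Finset.coe_insert, Set.mem_insert_iff] at hi hj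
        rcases hi with rfl | hi <;> rcases hj with rfl | hj
        · rfl
        · rw [Function.update_self, Function.update_of_ne (hne j hj) _ _] at hij
          exact absurd (hij ▸ Finset.mem_image_of_mem f hj) hg5
        · rw [Function.update_self, Function.update_of_ne (hne i hi) _ _] at hij
          exact absurd (hij.symm ▸ Finset.mem_image_of_mem f hi) hg5
        · rw [Function.update_of_ne (hne i hi) _ _,
            Function.update_of_ne (hne j hj) _ _] at hij
          exact hinj hi hj hij
      · intro i hi
        rcases Finset.mem_insert.mp hi with rfl | hi
        · rw [Function.update_self]; exact ⟨hg1, hg2, hg3, hg4, hg6⟩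
        · rw [Function.update_of_ne (hne i hi) _ _]
          exact hf i hi
  obtain ⟨f, hinj, hf⟩ := key Finset.univ
  exact ⟨f, fun a b h => hinj (by simp) (by simp) h, fun i => hf i (Finset.mem_univ i)⟩

/-- Chinese remainder theorem as an algebra isomorphism, for a product of pairwise distinct
monic irreducible polynomials. -/
theorem EtaleMonogenic.crt_algEquiv (k : Type u) [Field k] {ι : Type u} [Fintype ι]
    (f : ι → Polynomial k) (hmonic : ∀ i, (f i).Monic) (hirr : ∀ i, Irreducible (f i))
    (hinj : Function.Injective f) :
    Nonempty ((Polynomial k ⧸ Ideal.span {∏ i, f i}) ≃ₐ[k]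
      ∀ i, Polynomial k ⧸ Ideal.span {f i}) := by
  have hcop : ∀ i j, i ≠ j → IsCoprime (f i) (f j) := by
    intro i j hij
    refine isCoprime_of_irreducible_dvd (fun ⟨h1, _⟩ => (hmonic i).ne_zero h1) ?_
    intro z hz hzi hzj
    have h1 : Associated z (f i) := hz.associated_of_dvd (hirr i) hzi
    have h2 : Associated z (f j) := hz.associated_of_dvd (hirr j) hzj
    exact hij (hinj (Polynomial.eq_of_monic_of_associated (hmonic i) (hmonic j)
      (h1.symm.trans h2)))
  set Φ : Polynomial k →ₐ[k] ∀ i, Polynomial k ⧸ Ideal.span {f i} :=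
    Pi.algHom k _ (fun i => Ideal.Quotient.mkₐ k (Ideal.span {f i})) with hΦ
  have hker : ∀ a ∈ Ideal.span ({∏ i, f i} : Set (Polynomial k)), Φ a = 0 := by
    intro a ha
    rw [Ideal.mem_span_singleton] at ha
    funext i
    have : a ∈ Ideal.span ({f i} : Set (Polynomial k)) :=
      Ideal.mem_span_singleton.mpr ((Finset.dvd_prod_of_mem f (Finset.mem_univ i)).trans ha)
    exact Ideal.Quotient.eq_zero_iff_mem.mpr this
  set ψ := Ideal.Quotient.liftₐ (Ideal.span {∏ i, f i}) Φ hker with hψ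
  have hsurj : Function.Surjective ψ := by
    intro x
    obtain ⟨r, hr⟩ := Ideal.pi_quotient_surjective
      (I := fun i => Ideal.span ({f i} : Set (Polynomial k)))
      (fun i j hij => (Ideal.isCoprime_span_singleton_iff _ _).mpr (hcop i j hij)) x
    exact ⟨Ideal.Quotient.mk _ r, funext fun i => (hr i).symm ▸ rfl⟩
  have hinj' : Function.Injective ψ := by
    intro x y hxy
    obtain ⟨p, rfl⟩ := Ideal.Quotient.mk_surjective x
    obtain ⟨q, rfl⟩ := Ideal.Quotient.mk_surjective y
    have h0 : Φ p = Φ q := by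
      have h1 : ψ (Ideal.Quotient.mk _ p) = Φ p := by
        rfl
      have h2 : ψ (Ideal.Quotient.mk _ q) = Φ q := by
        rfl
      rw [← h1, ← h2, hxy]
    have : p - q ∈ ⨅ i, Ideal.span ({f i} : Set (Polynomial k)) := by
      rw [Submodule.mem_iInf]
      intro i
      have := congrFun h0 i
      simp only [hΦ, Pi.algHom_apply, Ideal.Quotient.mkₐ_eq_mk] at this
      rwa [Ideal.Quotient.mk_eq_mk_iff_sub_mem] at this
    rw [Ideal.iInf_span_singleton (fun i j hij => hcop i j hij)] at this
    rw [Ideal.Quotient.mk_eq_mk_iff_sub_mem]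
    exact this
  exact ⟨AlgEquiv.ofBijective ψ ⟨hinj', hsurj⟩⟩

theorem etale_algebra_monogenic
    (k A : Type u) [Field k] [Infinite k] [CommRing A] [Algebra k A]
    [Algebra.Etale k A] [Module.Finite k A]
    (n : ℕ) (hn : Module.finrank k A = n) :
    ∃ f : Polynomial k, f.Monic ∧ f.Separable ∧ f.natDegree = n ∧
      Nonempty (A ≃ₐ[k] Polynomial k ⧸ Ideal.span {f}) := by
  classical
  haveI : IsReduced A := Algebra.FormallyUnramified.isReduced_of_field k A
  haveI : IsArtinianRing A := isArtinian_of_tower k inferInstance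
  haveI : Finite {I : Ideal A // I.IsMaximal} := (IsArtinianRing.setOfPred_isMaximal_finite A).to_subtype
  haveI : Fintype {I : Ideal A // I.IsMaximal} := Fintype.ofFinite _
  letI hfield : ∀ I : {I : Ideal A // I.IsMaximal}, Field (A ⧸ I.1) := fun I =>
    haveI := I.2
    Ideal.Quotient.field I.1
  haveI hLfin : ∀ I : {I : Ideal A // I.IsMaximal}, Module.Finite k (A ⧸ I.1) := fun I =>
    Module.Finite.of_surjective (Ideal.Quotient.mkₐ k I.1).toLinearMap
      Ideal.Quotient.mk_surjective
  haveI hsep : ∀ I : {I : Ideal A // I.IsMaximal}, Algebra.IsSeparable k (A ⧸ I.1) := fun I =>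
    Algebra.FormallyUnramified.isSeparable k (A ⧸ I.1)
  -- A is isomorphic to the product of its residue fields
  set φ : A →ₐ[k] ∀ I : {I : Ideal A // I.IsMaximal}, A ⧸ I.1 :=
    Pi.algHom k _ (fun I => Ideal.Quotient.mkₐ k I.1) with hφ
  have hφinj : Function.Injective φ := by
    rw [injective_iff_map_eq_zero]
    intro a ha
    have hmem : ∀ J : Ideal A, J.IsPrime → a ∈ J := by
      intro J hJ
      have hJ' : J.IsMaximal := (IsArtinianRing.isPrime_iff_isMaximal J).mp hJ
      have := congrFun ha ⟨J, hJ'⟩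
      exact Ideal.Quotient.eq_zero_iff_mem.mp this
    exact (nilpotent_iff_mem_prime.mpr hmem).eq_zero
  have hφsurj : Function.Surjective φ := by
    intro x
    obtain ⟨r, hr⟩ := Ideal.pi_quotient_surjective
      (I := fun I : {I : Ideal A // I.IsMaximal} => I.1)
      (fun I J hIJ => Ideal.isCoprime_iff_sup_eq.mpr (Ideal.IsMaximal.coprime_of_ne I.2 J.2
        (fun h => hIJ (Subtype.ext h)))) x
    exact ⟨r, funext fun I => (hr I).symm ▸ rfl⟩
  have e₁ : A ≃ₐ[k] ∀ I : {I : Ideal A // I.IsMaximal}, A ⧸ I.1 :=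
    AlgEquiv.ofBijective φ ⟨hφinj, hφsurj⟩
  -- choose polynomials for each residue field
  obtain ⟨f, hfinj, hf⟩ := EtaleMonogenic.exists_good_family k
    (fun I : {I : Ideal A // I.IsMaximal} => A ⧸ I.1)
  set F := ∏ I : {I : Ideal A // I.IsMaximal}, f I with hF
  have hFmonic : F.Monic := monic_prod_of_monic _ _ (fun I _ => (hf I).1)
  have hFsep : F.Separable :=
    Polynomial.separable_prod (fun I J hIJ => by
      refine isCoprime_of_irreducible_dvd (fun ⟨h1, _⟩ => (hf I).1.ne_zero h1) ?_
      intro z hz hzi hzj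
      have h1 := hz.associated_of_dvd (hf I).2.1 hzi
      have h2 := hz.associated_of_dvd (hf J).2.1 hzj
      exact hIJ (hfinj (Polynomial.eq_of_monic_of_associated (hf I).1 (hf J).1
        (h1.symm.trans h2)))) (fun I => (hf I).2.2.1)
  have hFdeg : F.natDegree = n := by
    rw [hF, Polynomial.natDegree_prod _ _ (fun I _ => (hf I).1.ne_zero)]
    rw [Finset.sum_congr rfl (fun I _ => (hf I).2.2.2.1), ← Module.finrank_pi_fintype k, ← hn]
    exact (e₁.toLinearEquiv.finrank_eq).symm
  obtain ⟨e₃⟩ := EtaleMonogenic.crt_algEquiv k f (fun I => (hf I).1) (fun I => (hf I).2.1) hfinj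
  have e₂ : (∀ I : {I : Ideal A // I.IsMaximal}, A ⧸ I.1) ≃ₐ[k]
      ∀ I : {I : Ideal A // I.IsMaximal}, Polynomial k ⧸ Ideal.span {f I} :=
    AlgEquiv.piCongrRight (fun I => (Classical.choice (hf I).2.2.2.2).symm)
  exact ⟨F, hFmonic, hFsep, hFdeg, ⟨(e₁.trans e₂).trans e₃.symm⟩⟩
end
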